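/- Let (A,·,α) be a regular finite-dimensional Hom-pre-Lie algebra and r ∈ A⊗A satisfying r^♯∘(α^{-1})* = α∘r^♯, and define ξ∘η = ad^⋆_{r^♯(ξ)}η − R^⋆_{σ(r)^♯(η)}ξ for ξ,η ∈ A*. Then for all ξ,η ∈ A*: r^♯(α*(ξ))·r^♯(α*(η)) − r^♯(α*(ξ∘η)) = [[r,r]](ξ,η), where [[r,r]](ξ,η) ∈ A denotes the element obtained from [[r,r]] ∈ A⊗A⊗A by pairing its first tensor component with ξ and its second with η. -/

import Mathlib

open TensorProduct LinearMap Module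

section Defs

variable {K : Type*} [Field K]

/-- Port helper: the usual `LinearMap.addCommGroup` instance on `A →ₗ[K] K`, stated directly so
that nested instance searches (which now get stuck on `Module K K`) find it. -/
instance dualAddCommGroupPort {K' : Type*} [Field K'] {A' : Type*} [AddCommGroup A'] [Module K' A'] :
    AddCommGroup (A' →ₗ[K'] K') :=
  LinearMap.addCommGroup

section Basic
variable {A : Type*} [AddCommGroup A] [Module K A]
variable {B : Type*} [AddCommGroup B] [Module K B]
variable {V : Type*} [AddCommGroup V] [Module K V]

/-- A Hom-pre-Lie algebra structure. -/
def IsHomPreLie (m : A →ₗ[K] A →ₗ[K] A) (α : A →ₗ[K] A) : Prop :=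
  (∀ x y, α (m x y) = m (α x) (α y)) ∧
  ∀ x y z, m (m x y) (α z) - m (α x) (m y z) = m (m y x) (α z) - m (α y) (m x z)

/-- A Hom-Lie algebra structure. -/
def IsHomLie (br : A →ₗ[K] A →ₗ[K] A) (φ : A →ₗ[K] A) : Prop :=
  (∀ x y, br x y = - br y x) ∧
  (∀ x y, φ (br x y) = br (φ x) (φ y)) ∧
  ∀ x y z, br (φ x) (br y z) + br (φ y) (br z x) + br (φ z) (br x y) = 0

/-- A representation of a Hom-Lie algebra on `V` with respect to `β`. -/
def IsHomLieRep (br : A →ₗ[K] A →ₗ[K] A) (φ : A →ₗ[K] A)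
    (β : Module.End K V) (ρ : A →ₗ[K] Module.End K V) : Prop :=
  (∀ x, ρ (φ x) * β = β * ρ x) ∧
  ∀ x y, ρ (br x y) * β = ρ (φ x) * ρ y - ρ (φ y) * ρ x

/-- A representation of a Hom-pre-Lie algebra on `V` with respect to `β`. -/
def IsHomPreLieRep (m : A →ₗ[K] A →ₗ[K] A) (α : A →ₗ[K] A)
    (β : Module.End K V) (ρ μ : A →ₗ[K] Module.End K V) : Prop :=
  IsHomLieRep (m - m.flip) α β ρ ∧
  (∀ x, β * μ x = μ (α x) * β) ∧
  ∀ x y, μ (α y) * μ x - μ (m x y) * β = μ (α y) * ρ x - ρ (α x) * μ y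

/-- A 1-cocycle of a Hom-Lie algebra with respect to a representation. -/
def IsHomLieCocycle (br : A →ₗ[K] A →ₗ[K] A) (φ : A →ₗ[K] A)
    (ρ : A →ₗ[K] Module.End K V) (δ : A →ₗ[K] V) : Prop :=
  ∀ x y, δ (br x y) = ρ (φ x) (δ y) - ρ (φ y) (δ x)

/-- A matched pair of Hom-Lie algebras. -/
def IsHomLieMatchedPair (brA : A →ₗ[K] A →ₗ[K] A) (φA : A →ₗ[K] A)
    (brB : B →ₗ[K] B →ₗ[K] B) (φB : B →ₗ[K] B)
    (ρ : A →ₗ[K] Module.End K B) (ρ' : B →ₗ[K] Module.End K A) : Prop :=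
  IsHomLie brA φA ∧ IsHomLie brB φB ∧
  IsHomLieRep brA φA φB ρ ∧ IsHomLieRep brB φB φA ρ' ∧
  (∀ x y x', ρ' (φB x') (brA x y) =
    brA (ρ' x' x) (φA y) + brA (φA x) (ρ' x' y) + ρ' (ρ y x') (φA x) - ρ' (ρ x x') (φA y)) ∧
  ∀ x x' y', ρ (φA x) (brB x' y') =
    brB (ρ x x') (φB y') + brB (φB x') (ρ x y') + ρ (ρ' y' x) (φB x') - ρ (ρ' x' x) (φB y')

/-- A matched pair of Hom-pre-Lie algebras. -/
def IsHomPreLieMatchedPair (mA : A →ₗ[K] A →ₗ[K] A) (αA : A →ₗ[K] A)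
    (mB : B →ₗ[K] B →ₗ[K] B) (αB : B →ₗ[K] B)
    (lA rA : A →ₗ[K] Module.End K B) (lB rB : B →ₗ[K] Module.End K A) : Prop :=
  IsHomPreLie mA αA ∧ IsHomPreLie mB αB ∧
  IsHomPreLieRep mA αA αB lA rA ∧ IsHomPreLieRep mB αB αA lB rB ∧
  (∀ (x : A) (a b : B), rA (αA x) (mB a b - mB b a) =
    rA (lB b x) (αB a) - rA (lB a x) (αB b) + mB (αB a) (rA x b) - mB (αB b) (rA x a)) ∧
  (∀ (x : A) (a b : B), lA (αA x) (mB a b) =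
    -(lA (lB a x - rB a x) (αB b)) + mB (lA x a - rA x a) (αB b)
      + rA (rB b x) (αB a) + mB (αB a) (lA x b)) ∧
  (∀ (a : B) (x y : A), rB (αB a) (mA x y - mA y x) =
    rB (lA y a) (αA x) - rB (lA x a) (αA y) + mA (αA x) (rB a y) - mA (αA y) (rB a x)) ∧
  ∀ (a : B) (x y : A), lB (αB a) (mA x y) =
    -(lB (lA x a - rA x a) (αA y)) + mA (lB a x - rB a x) (αA y)
      + rB (rA y a) (αA x) + mA (αA x) (lB a y)

/-- A Hom-L-dendriform algebra structure. -/
def IsHomLDendriform (tr tl : A →ₗ[K] A →ₗ[K] A) (α : A →ₗ[K] A) : Prop :=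
  (∀ x y, α (tr x y) = tr (α x) (α y)) ∧
  (∀ x y, α (tl x y) = tl (α x) (α y)) ∧
  (∀ x y z, tr (tr x y) (α z) + tr (tl x y) (α z) + tr (α y) (tr x z)
      - tr (tl y x) (α z) - tr (tr y x) (α z) - tr (α x) (tr y z) = 0) ∧
  ∀ x y z, tl (tr x y) (α z) + tl (α y) (tr x z) + tl (α y) (tl x z)
      - tl (tl y x) (α z) - tr (α x) (tl y z) = 0

/-- A Hom-O-operator on a Hom-pre-Lie algebra with respect to a representation. -/
def IsHomOOperator (m : A →ₗ[K] A →ₗ[K] A) (α : A →ₗ[K] A)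
    (β : V ≃ₗ[K] V) (ρ μ : A →ₗ[K] Module.End K V) (T : V →ₗ[K] A) : Prop :=
  (∀ v, T (β v) = α (T v)) ∧
  ∀ u v, m (T u) (T v) = T (ρ (T (β.symm u)) v + μ (T (β.symm v)) u)

/-- A quadratic Hom-pre-Lie algebra. -/
def IsQuadraticHomPreLie (m : A →ₗ[K] A →ₗ[K] A) (α : A →ₗ[K] A)
    (ω : A →ₗ[K] A →ₗ[K] K) : Prop :=
  IsHomPreLie m α ∧
  (∀ x y, ω x y = - ω y x) ∧
  (∀ x, (∀ y, ω x y = 0) → x = 0) ∧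
  (∀ x y, ω (α x) (α y) = ω x y) ∧
  ∀ x y z, ω (m x y) (α z) = - ω (α y) (m x z - m z x)

/-- A Manin triple for Hom-pre-Lie algebras. -/
def IsManinTriple (m : A →ₗ[K] A →ₗ[K] A) (α : A →ₗ[K] A)
    (ω : A →ₗ[K] A →ₗ[K] K) (A1 A2 : Submodule K A) : Prop :=
  IsQuadraticHomPreLie m α ω ∧
  (∀ x ∈ A1, ∀ y ∈ A1, m x y ∈ A1) ∧ (∀ x ∈ A1, α x ∈ A1) ∧
  (∀ x ∈ A2, ∀ y ∈ A2, m x y ∈ A2) ∧ (∀ x ∈ A2, α x ∈ A2) ∧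
  (∀ x ∈ A1, ∀ y ∈ A1, ω x y = 0) ∧ (∀ x ∈ A2, ∀ y ∈ A2, ω x y = 0) ∧
  IsCompl A1 A2

/-- A Hessian structure on a Hom-pre-Lie algebra. -/
def IsHessian (m : A →ₗ[K] A →ₗ[K] A) (α : A →ₗ[K] A) (Bf : A →ₗ[K] A →ₗ[K] K) : Prop :=
  (∀ x y, Bf x y = Bf y x) ∧ (∀ x, (∀ y, Bf x y = 0) → x = 0) ∧
  (∀ x y, Bf (α x) (α y) = Bf x y) ∧
  ∀ x y z, Bf (m x y) (α z) - Bf (α x) (m y z) = Bf (m y x) (α z) - Bf (α y) (m x z)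

end Basic

section Transpose
variable {X Y : Type*} [AddCommGroup X] [Module K X] [AddCommGroup Y] [Module K Y]

/-- The transpose of linear maps, as a bundled linear map. -/
noncomputable def transposeH : (X →ₗ[K] Y) →ₗ[K] (Y →ₗ[K] K) →ₗ[K] (X →ₗ[K] K) :=
  (LinearMap.llcomp K X Y K).flip

@[simp] theorem transposeH_apply (f : X →ₗ[K] Y) (ξ : Y →ₗ[K] K) (x : X) :
    transposeH f ξ x = ξ (f x) := rfl

end Transpose

section StarOps
variable {A : Type*} [AddCommGroup A] [Module K A]

/-- The evaluation map into the double dual. -/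
noncomputable def evalH : A →ₗ[K] ((A →ₗ[K] K) →ₗ[K] K) :=
  (LinearMap.id : (A →ₗ[K] K) →ₗ[K] (A →ₗ[K] K)).flip

/-- The operator `L^⋆` : `⟨L^⋆_x ξ, y⟩ = -⟨ξ, α⁻¹(x) · α⁻²(y)⟩`. -/
noncomputable def Lstar (m : A →ₗ[K] A →ₗ[K] A) (α : A ≃ₗ[K] A) :
    A →ₗ[K] (A →ₗ[K] K) →ₗ[K] (A →ₗ[K] K) :=
  -(transposeH ∘ₗ
      (LinearMap.lcomp K A ((α ^ (-2 : ℤ) : A ≃ₗ[K] A) : A →ₗ[K] A)) ∘ₗ m ∘ₗ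
      ((α⁻¹ : A ≃ₗ[K] A) : A →ₗ[K] A))

/-- The operator `R^⋆` : `⟨R^⋆_x ξ, y⟩ = -⟨ξ, α⁻²(y) · α⁻¹(x)⟩`. -/
noncomputable def Rstar (m : A →ₗ[K] A →ₗ[K] A) (α : A ≃ₗ[K] A) :
    A →ₗ[K] (A →ₗ[K] K) →ₗ[K] (A →ₗ[K] K) :=
  -(transposeH ∘ₗ
      (LinearMap.lcomp K A ((α ^ (-2 : ℤ) : A ≃ₗ[K] A) : A →ₗ[K] A)) ∘ₗ m.flip ∘ₗ
      ((α⁻¹ : A ≃ₗ[K] A) : A →ₗ[K] A))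

/-- The operator `ad^⋆ = L^⋆ - R^⋆`. -/
noncomputable def adStar (m : A →ₗ[K] A →ₗ[K] A) (α : A ≃ₗ[K] A) :
    A →ₗ[K] (A →ₗ[K] K) →ₗ[K] (A →ₗ[K] K) :=
  Lstar m α - Rstar m α

variable [FiniteDimensional K A]

/-- The inverse of the double-dual evaluation isomorphism. -/
noncomputable def evalInvH : ((A →ₗ[K] K) →ₗ[K] K) →ₗ[K] A :=
  (Module.evalEquiv K A).symm.toLinearMap

/-- The operator `ℒ^⋆` : `⟨η, ℒ^⋆_ξ x⟩ = -⟨(α⁻¹)*(ξ) ∘ η, α²(x)⟩`. -/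
noncomputable def Lcurly
    (mc : (A →ₗ[K] K) →ₗ[K] (A →ₗ[K] K) →ₗ[K] (A →ₗ[K] K))
    (α : A ≃ₗ[K] A) : (A →ₗ[K] K) →ₗ[K] A →ₗ[K] A :=
  -((LinearMap.llcomp K A ((A →ₗ[K] K) →ₗ[K] K) A evalInvH) ∘ₗ
      (LinearMap.lcomp K ((A →ₗ[K] K) →ₗ[K] K)
        (evalH ∘ₗ ((α ^ (2 : ℤ) : A ≃ₗ[K] A) : A →ₗ[K] A))) ∘ₗ
      transposeH ∘ₗ mc ∘ₗ
      (transposeH ((α⁻¹ : A ≃ₗ[K] A) : A →ₗ[K] A)))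

/-- The operator `ℛ^⋆` : `⟨η, ℛ^⋆_ξ x⟩ = -⟨η ∘ (α⁻¹)*(ξ), α²(x)⟩`. -/
noncomputable def Rcurly
    (mc : (A →ₗ[K] K) →ₗ[K] (A →ₗ[K] K) →ₗ[K] (A →ₗ[K] K))
    (α : A ≃ₗ[K] A) : (A →ₗ[K] K) →ₗ[K] A →ₗ[K] A :=
  -((LinearMap.llcomp K A ((A →ₗ[K] K) →ₗ[K] K) A evalInvH) ∘ₗ
      (LinearMap.lcomp K ((A →ₗ[K] K) →ₗ[K] K)
        (evalH ∘ₗ ((α ^ (2 : ℤ) : A ≃ₗ[K] A) : A →ₗ[K] A))) ∘ₗ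
      transposeH ∘ₗ mc.flip ∘ₗ
      (transposeH ((α⁻¹ : A ≃ₗ[K] A) : A →ₗ[K] A)))

/-- The operator `𝔞𝔡^⋆ = ℒ^⋆ - ℛ^⋆`. -/
noncomputable def adCurly
    (mc : (A →ₗ[K] K) →ₗ[K] (A →ₗ[K] K) →ₗ[K] (A →ₗ[K] K))
    (α : A ≃ₗ[K] A) : (A →ₗ[K] K) →ₗ[K] A →ₗ[K] A :=
  Lcurly mc α - Rcurly mc α

end StarOps

section Tensor
variable {A : Type*} [AddCommGroup A] [Module K A]

/-- The pairing of `ξ ⊗ η` with elements of `A ⊗ A`. -/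
noncomputable def tpair (ξ η : A →ₗ[K] K) : (A ⊗[K] A) →ₗ[K] K :=
  (TensorProduct.lid K K).toLinearMap ∘ₗ TensorProduct.map ξ η

/-- The pairing of `x ⊗ y` with elements of `A* ⊗ A*`. -/
noncomputable def dpair (x y : A) : ((A →ₗ[K] K) ⊗[K] (A →ₗ[K] K)) →ₗ[K] K :=
  (TensorProduct.lid K K).toLinearMap ∘ₗ TensorProduct.map (evalH x) (evalH y)

/-- Pairing the first two tensor components of `A ⊗ A ⊗ A` with `ξ` and `η`. -/
noncomputable def pair12 (ξ η : A →ₗ[K] K) : (A ⊗[K] (A ⊗[K] A)) →ₗ[K] A :=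
  (TensorProduct.lid K A).toLinearMap ∘ₗ
    TensorProduct.map ξ ((TensorProduct.lid K A).toLinearMap ∘ₗ
      TensorProduct.map η LinearMap.id)

/-- The map `r^♯ : A* → A` associated to `r ∈ A ⊗ A`, `⟨r^♯(ξ), η⟩ = ⟨r, ξ ⊗ η⟩`. -/
noncomputable def rSharpL (r : A ⊗[K] A) : (A →ₗ[K] K) →ₗ[K] A :=
  ((LinearMap.llcomp K (A ⊗[K] A) (K ⊗[K] A) A (TensorProduct.lid K A).toLinearMap) ∘ₗ
    (LinearMap.rTensorHom A)).flip r

/-- The bilinear operation producing `[[r,r]]` out of `r ⊗ r`. -/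
noncomputable def homPreLieBB (m : A →ₗ[K] A →ₗ[K] A) (α : A →ₗ[K] A) :
    ((A ⊗[K] A) ⊗[K] (A ⊗[K] A)) →ₗ[K] (A ⊗[K] (A ⊗[K] A)) :=
  (TensorProduct.assoc K A A A).toLinearMap ∘ₗ
      (TensorProduct.map (TensorProduct.map α α) (TensorProduct.lift m)) ∘ₗ
      (TensorProduct.tensorTensorTensorComm K A A A A).toLinearMap
    - (TensorProduct.map α (TensorProduct.map (TensorProduct.lift (m.flip - m)) α)) ∘ₗ
      (LinearMap.lTensor A ((TensorProduct.assoc K A A A).symm.toLinearMap)) ∘ₗ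
      (TensorProduct.assoc K A A (A ⊗[K] A)).toLinearMap
    - (TensorProduct.map (TensorProduct.lift m)
        ((TensorProduct.map α α) ∘ₗ (TensorProduct.comm K A A).toLinearMap)) ∘ₗ
      (TensorProduct.tensorTensorTensorComm K A A A A).toLinearMap

/-- The element `[[r,r]] ∈ A ⊗ A ⊗ A`. -/
noncomputable def bracket2 (m : A →ₗ[K] A →ₗ[K] A) (α : A →ₗ[K] A) (r : A ⊗[K] A) :
    A ⊗[K] (A ⊗[K] A) :=
  homPreLieBB m α (r ⊗ₜ[K] r)

/-- A Hom-s-matrix in a Hom-pre-Lie algebra. -/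
def IsHomSMatrix {B : Type*} [AddCommGroup B] [Module K B]
    (mB : B →ₗ[K] B →ₗ[K] B) (γ : B ≃ₗ[K] B) (r : B ⊗[K] B) : Prop :=
  (TensorProduct.comm K B B) r = r ∧
  (∀ ξ, rSharpL r (ξ ∘ₗ ((γ⁻¹ : B ≃ₗ[K] B) : B →ₗ[K] B)) = γ (rSharpL r ξ)) ∧
  bracket2 mB (γ : B →ₗ[K] B) r = 0

/-- The representation `x ↦ F(x) ⊗ c + c ⊗ G(x)` on `Y ⊗ Y`. -/
noncomputable def tensorRep {Y : Type*} [AddCommGroup Y] [Module K Y]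
    (F G : A →ₗ[K] Y →ₗ[K] Y) (c : Y →ₗ[K] Y) :
    A →ₗ[K] Module.End K (Y ⊗[K] Y) :=
  (LinearMap.mulRight K (LinearMap.lTensor Y c)) ∘ₗ (LinearMap.rTensorHom Y) ∘ₗ F
    + (LinearMap.mulLeft K (LinearMap.rTensor Y c)) ∘ₗ (LinearMap.lTensorHom Y) ∘ₗ G

/-- The dual map `ρ^⋆` : `⟨ρ^⋆(x)ξ, u⟩ = -⟨(β⁻²)*(ξ), ρ(α(x))u⟩`. -/
noncomputable def rhoStar {V : Type*} [AddCommGroup V] [Module K V]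
    (α : A →ₗ[K] A) (β : V ≃ₗ[K] V) (ρ : A →ₗ[K] Module.End K V) :
    A →ₗ[K] (V →ₗ[K] K) →ₗ[K] (V →ₗ[K] K) :=
  -(transposeH ∘ₗ
      (LinearMap.mulLeft K (((β ^ (-2 : ℤ) : V ≃ₗ[K] V) : V →ₗ[K] V) : Module.End K V)) ∘ₗ
      ρ ∘ₗ α)

/-- The semidirect product Hom-pre-Lie product on `A × W`. -/
noncomputable def sdProduct {W : Type*} [AddCommGroup W] [Module K W]
    (m : A →ₗ[K] A →ₗ[K] A) (l r : A →ₗ[K] W →ₗ[K] W) :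
    (A × W) →ₗ[K] (A × W) →ₗ[K] (A × W) :=
  (m.compl₁₂ (LinearMap.fst K A W) (LinearMap.fst K A W)).compr₂ (LinearMap.inl K A W)
    + ((l.compl₁₂ (LinearMap.fst K A W) (LinearMap.snd K A W))
        + (r.compl₁₂ (LinearMap.fst K A W) (LinearMap.snd K A W)).flip).compr₂
      (LinearMap.inr K A W)

end Tensor

section Std
variable (K)
variable (A : Type*) [AddCommGroup A] [Module K A]

/-- The standard bilinear form `ω̄(x+ξ, y+η) = ⟨ξ,y⟩ - ⟨η,x⟩` on `A × A*`. -/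
noncomputable def stdOmega :
    (A × (A →ₗ[K] K)) →ₗ[K] (A × (A →ₗ[K] K)) →ₗ[K] K :=
  (LinearMap.id : (A →ₗ[K] K) →ₗ[K] (A →ₗ[K] K)).compl₁₂
      (LinearMap.snd K A (A →ₗ[K] K)) (LinearMap.fst K A (A →ₗ[K] K))
    - ((LinearMap.id : (A →ₗ[K] K) →ₗ[K] (A →ₗ[K] K)).compl₁₂
      (LinearMap.snd K A (A →ₗ[K] K)) (LinearMap.fst K A (A →ₗ[K] K))).flip

variable {K A}

/-- The standard product `⋄` on `A × A*`:
`(x+ξ) ⋄ (y+η) = x·y + 𝔞𝔡^⋆_ξ y - ℛ^⋆_η x + ξ∘η + ad^⋆_x η - R^⋆_y ξ`. -/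
noncomputable def stdDiamond [FiniteDimensional K A]
    (m : A →ₗ[K] A →ₗ[K] A) (α : A ≃ₗ[K] A)
    (mc : (A →ₗ[K] K) →ₗ[K] (A →ₗ[K] K) →ₗ[K] (A →ₗ[K] K)) :
    (A × (A →ₗ[K] K)) →ₗ[K] (A × (A →ₗ[K] K)) →ₗ[K] (A × (A →ₗ[K] K)) :=
  (m.compl₁₂ (LinearMap.fst K A (A →ₗ[K] K)) (LinearMap.fst K A (A →ₗ[K] K))
      + (adCurly mc α).compl₁₂ (LinearMap.snd K A (A →ₗ[K] K)) (LinearMap.fst K A (A →ₗ[K] K))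
      - ((Rcurly mc α).compl₁₂ (LinearMap.snd K A (A →ₗ[K] K))
          (LinearMap.fst K A (A →ₗ[K] K))).flip).compr₂
      (LinearMap.inl K A (A →ₗ[K] K))
    + (mc.compl₁₂ (LinearMap.snd K A (A →ₗ[K] K)) (LinearMap.snd K A (A →ₗ[K] K))
      + (adStar m α).compl₁₂ (LinearMap.fst K A (A →ₗ[K] K)) (LinearMap.snd K A (A →ₗ[K] K))
      - ((Rstar m α).compl₁₂ (LinearMap.fst K A (A →ₗ[K] K))
          (LinearMap.snd K A (A →ₗ[K] K))).flip).compr₂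
      (LinearMap.inr K A (A →ₗ[K] K))

end Std

section Bialg
variable {A : Type*} [AddCommGroup A] [Module K A]

/-- A Hom-pre-Lie bialgebra: the two 1-cocycle conditions on the
comultiplications `φ*` and `ψ*`. -/
def IsHomPreLieBialgebra (m : A →ₗ[K] A →ₗ[K] A) (α : A ≃ₗ[K] A)
    (mc : (A →ₗ[K] K) →ₗ[K] (A →ₗ[K] K) →ₗ[K] (A →ₗ[K] K))
    (φs : A →ₗ[K] A ⊗[K] A)
    (ψs : (A →ₗ[K] K) →ₗ[K] (A →ₗ[K] K) ⊗[K] (A →ₗ[K] K)) : Prop :=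
  IsHomLieCocycle (m - m.flip) (α : A →ₗ[K] A)
    (tensorRep (m ∘ₗ ((α ^ (-2 : ℤ) : A ≃ₗ[K] A) : A →ₗ[K] A))
      ((m - m.flip) ∘ₗ ((α ^ (-2 : ℤ) : A ≃ₗ[K] A) : A →ₗ[K] A))
      (α : A →ₗ[K] A)) φs ∧
  IsHomLieCocycle (mc - mc.flip) (transposeH ((α⁻¹ : A ≃ₗ[K] A) : A →ₗ[K] A))
    (tensorRep (mc ∘ₗ transposeH ((α ^ (2 : ℤ) : A ≃ₗ[K] A) : A →ₗ[K] A))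
      ((mc - mc.flip) ∘ₗ transposeH ((α ^ (2 : ℤ) : A ≃ₗ[K] A) : A →ₗ[K] A))
      (transposeH ((α⁻¹ : A ≃ₗ[K] A) : A →ₗ[K] A))) ψs

end Bialg

end Defs

universe u v
section Aux
variable {K : Type*} [Field K] {A : Type*} [AddCommGroup A] [Module K A]

noncomputable def rSharpM : (A ⊗[K] A) →ₗ[K] (A →ₗ[K] K) →ₗ[K] A :=
  ((LinearMap.llcomp K (A ⊗[K] A) (K ⊗[K] A) A (TensorProduct.lid K A).toLinearMap) ∘ₗ
    (LinearMap.rTensorHom A)).flip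

lemma rSharpL_eq (r : A ⊗[K] A) : rSharpL r = rSharpM r := rfl

@[simp] lemma rSharpM_tmul (x y : A) (ξ : A →ₗ[K] K) :
    rSharpM (x ⊗ₜ[K] y) ξ = ξ x • y := by
  simp [rSharpM]

lemma rSharpM_injective [FiniteDimensional K A] :
    Function.Injective (rSharpM (K := K) (A := A)) := by
  have h : ∀ r : A ⊗[K] A,
      rSharpM r = ((TensorProduct.congr (Module.evalEquiv K A)
        (LinearEquiv.refl K A)).trans (dualTensorHomEquiv K (Module.Dual K A) A)) r := by
    intro r
    induction r using TensorProduct.induction_on with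
    | zero => simp
    | tmul x y => ext ξ; simp [dualTensorHomEquiv]
    | add a b ha hb => simp [map_add, ha, hb]
  intro r s hrs
  apply ((TensorProduct.congr (Module.evalEquiv K A)
        (LinearEquiv.refl K A)).trans (dualTensorHomEquiv K (Module.Dual K A) A)).injective
  rw [← h, ← h, hrs]

lemma rSharpM_rTensor (f : A →ₗ[K] A) (r : A ⊗[K] A) (ξ : A →ₗ[K] K) :
    rSharpM (LinearMap.rTensor A f r) ξ = rSharpM r (ξ ∘ₗ f) := by
  induction r using TensorProduct.induction_on with
  | zero => simp
  | tmul x y => simp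
  | add a b ha hb => simp [map_add, ha, hb]

lemma rSharpM_lTensor (f : A →ₗ[K] A) (r : A ⊗[K] A) (ξ : A →ₗ[K] K) :
    rSharpM (LinearMap.lTensor A f r) ξ = f (rSharpM r ξ) := by
  induction r using TensorProduct.induction_on with
  | zero => simp
  | tmul x y => simp
  | add a b ha hb => simp [map_add, ha, hb]

lemma rSharpM_map (f g : A →ₗ[K] A) (r : A ⊗[K] A) (ξ : A →ₗ[K] K) :
    rSharpM (TensorProduct.map f g r) ξ = g (rSharpM r (ξ ∘ₗ f)) := by
  induction r using TensorProduct.induction_on with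
  | zero => simp
  | tmul x y => simp
  | add a b ha hb => simp [map_add, ha, hb]

lemma comm_map (f g : A →ₗ[K] A) (r : A ⊗[K] A) :
    (TensorProduct.comm K A A) (TensorProduct.map f g r)
      = TensorProduct.map g f ((TensorProduct.comm K A A) r) := by
  induction r using TensorProduct.induction_on with
  | zero => simp
  | tmul x y => simp
  | add a b ha hb => simp [map_add, ha, hb]

end Aux

section Aux2
variable {K : Type*} [Field K] {A : Type*} [AddCommGroup A] [Module K A]

lemma inv_apply_apply (α : A ≃ₗ[K] A) (z : A) : (α⁻¹ : A ≃ₗ[K] A) (α z) = z :=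
  α.symm_apply_apply z

lemma pow2_inv_apply (α : A ≃ₗ[K] A) (z : A) : ((α ^ (2:ℤ))⁻¹ : A ≃ₗ[K] A) (α (α z)) = z := by
  have h : α (α z) = (α ^ (2:ℤ) : A ≃ₗ[K] A) z := by
    rw [show ((2:ℤ)) = ((2:ℕ):ℤ) by norm_num, zpow_natCast, pow_two]; rfl
  rw [h]
  exact (α ^ (2:ℤ)).symm_apply_apply z

lemma pow2_inv_apply' (α : A ≃ₗ[K] A) (z : A) : ((α ^ (2:ℕ))⁻¹ : A ≃ₗ[K] A) (α (α z)) = z := by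
  have h : α (α z) = (α ^ (2:ℕ) : A ≃ₗ[K] A) z := by rw [pow_two]; rfl
  rw [h]
  exact (α ^ (2:ℕ)).symm_apply_apply z

lemma adStar_comp (m : A →ₗ[K] A →ₗ[K] A) (α : A ≃ₗ[K] A) (a : A) (η : A →ₗ[K] K) :
    ((adStar m α (α a)) η) ∘ₗ (α : A →ₗ[K] A) ∘ₗ (α : A →ₗ[K] A)
      = η ∘ₗ (m.flip a - m a) := by
  ext y
  simp [adStar, Lstar, Rstar, inv_apply_apply, pow2_inv_apply, pow2_inv_apply']
  abel

lemma Rstar_comp (m : A →ₗ[K] A →ₗ[K] A) (α : A ≃ₗ[K] A) (w : A) (ξ : A →ₗ[K] K) :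
    ((Rstar m α (α w)) ξ) ∘ₗ (α : A →ₗ[K] A) ∘ₗ (α : A →ₗ[K] A)
      = -(ξ ∘ₗ (m.flip w)) := by
  ext y
  simp [Rstar, inv_apply_apply, pow2_inv_apply, pow2_inv_apply']

lemma main_bilinear (m : A →ₗ[K] A →ₗ[K] A) (α : A ≃ₗ[K] A) (ξ η : A →ₗ[K] K) :
    ∀ r s : A ⊗[K] A,
      m (rSharpM r (ξ ∘ₗ (α : A →ₗ[K] A))) (rSharpM s (η ∘ₗ (α : A →ₗ[K] A)))
        - α (rSharpM s (η ∘ₗ (m.flip (rSharpM r (ξ ∘ₗ (α : A →ₗ[K] A)))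
            - m (rSharpM r (ξ ∘ₗ (α : A →ₗ[K] A))))))
        - α (rSharpM r (ξ ∘ₗ (m.flip
            (rSharpM ((TensorProduct.comm K A A) s) (η ∘ₗ (α : A →ₗ[K] A))))))
      = pair12 ξ η (homPreLieBB m (α : A →ₗ[K] A) (r ⊗ₜ[K] s)) := by
  intro r s
  induction r using TensorProduct.induction_on with
  | zero => simp
  | add r₁ r₂ h₁ h₂ =>
      simp only [map_add, add_tmul, LinearMap.add_apply, LinearMap.comp_add, sub_add,
        map_sub, LinearMap.comp_sub] at *
      rw [← h₁, ← h₂]; abel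
  | tmul x y =>
      induction s using TensorProduct.induction_on with
      | zero => simp
      | add s₁ s₂ h₁ h₂ =>
          simp only [map_add, tmul_add, LinearMap.add_apply, LinearMap.comp_add, sub_add,
            map_sub, LinearMap.comp_sub] at *
          rw [← h₁, ← h₂]; abel
      | tmul u v =>
          simp [homPreLieBB, pair12, smul_smul, mul_comm]
          module

end Aux2

theorem stmt_6 {K : Type*} [Field K] {A : Type*} [AddCommGroup A] [Module K A]
    [FiniteDimensional K A]
    (m : A →ₗ[K] A →ₗ[K] A) (α : A ≃ₗ[K] A)
    (h : IsHomPreLie m (α : A →ₗ[K] A))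
    (r : A ⊗[K] A)
    (hr : ∀ ξ : (A →ₗ[K] K), rSharpL r (ξ ∘ₗ ((α⁻¹ : A ≃ₗ[K] A) : A →ₗ[K] A)) = α (rSharpL r ξ)) :
    ∀ ξ η : (A →ₗ[K] K),
      m (rSharpL r (ξ ∘ₗ (α : A →ₗ[K] A))) (rSharpL r (η ∘ₗ (α : A →ₗ[K] A)))
        - rSharpL r ((adStar m α (rSharpL r ξ) η
            - Rstar m α (rSharpL ((TensorProduct.comm K A A) r) η) ξ) ∘ₗ (α : A →ₗ[K] A))
      = pair12 ξ η (bracket2 m (α : A →ₗ[K] A) r) := by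
  intro ξ η
  simp only [rSharpL_eq]
  set β := (α : A →ₗ[K] A) with hβ
  have hr' : ∀ ζ : A →ₗ[K] K, rSharpM r (ζ ∘ₗ ((α⁻¹ : A ≃ₗ[K] A) : A →ₗ[K] A))
      = α (rSharpM r ζ) := by
    intro ζ; exact hr ζ
  -- composing with α on the right
  have Ha : ∀ ζ : A →ₗ[K] K, rSharpM r (ζ ∘ₗ β) = α.symm (rSharpM r ζ) := by
    intro ζ
    have h1 : (ζ ∘ₗ β) ∘ₗ ((α⁻¹ : A ≃ₗ[K] A) : A →ₗ[K] A) = ζ := by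
      ext z; exact congrArg ζ (α.apply_symm_apply z)
    have := hr' (ζ ∘ₗ β)
    rw [h1] at this
    rw [this, α.symm_apply_apply]
  -- invariance of r, hence the analogue for `comm r`
  have hinv : TensorProduct.map ((α⁻¹ : A ≃ₗ[K] A) : A →ₗ[K] A)
      ((α⁻¹ : A ≃ₗ[K] A) : A →ₗ[K] A) r = r := by
    apply rSharpM_injective
    ext ζ
    rw [rSharpM_map, hr']
    exact α.symm_apply_apply _
  have Hc : ∀ ζ : A →ₗ[K] K,
      rSharpM ((TensorProduct.comm K A A) r) (ζ ∘ₗ β)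
        = α.symm (rSharpM ((TensorProduct.comm K A A) r) ζ) := by
    intro ζ
    have h2 : TensorProduct.map ((α⁻¹ : A ≃ₗ[K] A) : A →ₗ[K] A)
        ((α⁻¹ : A ≃ₗ[K] A) : A →ₗ[K] A) ((TensorProduct.comm K A A) r)
        = (TensorProduct.comm K A A) r := by
      conv_rhs => rw [← hinv]
      rw [comm_map]
    have h3 : (ζ ∘ₗ β) ∘ₗ ((α⁻¹ : A ≃ₗ[K] A) : A →ₗ[K] A) = ζ := by
      ext z; exact congrArg ζ (α.apply_symm_apply z)
    conv_lhs => rw [← h2]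
    rw [rSharpM_map, h3]
    rfl
  set a := rSharpM r (ξ ∘ₗ β) with ha
  set b := rSharpM r (η ∘ₗ β) with hb
  set w := rSharpM ((TensorProduct.comm K A A) r) (η ∘ₗ β) with hw
  have hA : rSharpM r ξ = α a := by rw [ha, Ha, α.apply_symm_apply]
  have hW : rSharpM ((TensorProduct.comm K A A) r) η = α w := by
    rw [hw, Hc, α.apply_symm_apply]
  rw [hA, hW]
  set Z := adStar m α (α a) η - Rstar m α (α w) ξ with hZ
  have hZ2 : (Z ∘ₗ β) ∘ₗ β = η ∘ₗ (m.flip a - m a) + ξ ∘ₗ (m.flip w) := by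
    rw [hZ, LinearMap.sub_comp, LinearMap.sub_comp, LinearMap.comp_assoc,
      LinearMap.comp_assoc, adStar_comp, Rstar_comp]
    abel
  have hstep : rSharpM r (Z ∘ₗ β) = α (rSharpM r ((Z ∘ₗ β) ∘ₗ β)) := by
    rw [Ha (Z ∘ₗ β), α.apply_symm_apply]
  rw [hstep, hZ2, map_add, map_add]
  have hfin := main_bilinear m α ξ η r r
  rw [← hβ, ← ha, ← hb, ← hw] at hfin
  rw [show pair12 ξ η (bracket2 m β r) = pair12 ξ η (homPreLieBB m β (r ⊗ₜ[K] r)) from rfl]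
  rw [← hfin]
  abel
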